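/- If m ≥ 2 and G is a graph on n ≥ 1 vertices, then D_m(G) and D_m^*(G) are not Seidel cospectral, since -1 occurs with multiplicity at least mn - n > 0 in the Seidel spectrum of D_m(G) while every eigenvalue of D_m^*(G) of the form mσ_i - (m-1) equals -1 only when σ_i = (m-2)/m; in particular, if |σ_i| > (m-1)/m for all i, the multiplicity of the eigenvalue 1 differs between the two spectra. -/

import Mathlib

open Matrix Kronecker BigOperators Finset

/-- The all-ones matrix. -/
noncomputable def allOnes (k : Type*) [Fintype k] : Matrix k k ℝ :=
  Matrix.of fun _ _ => 1

/-- The Seidel matrix formed from an adjacency matrix `M`: `S(M) = J - I - 2M`. -/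
noncomputable def seidelOf {k : Type*} [Fintype k] [DecidableEq k]
    (M : Matrix k k ℝ) : Matrix k k ℝ :=
  allOnes k - 1 - 2 • M

/-- The (complex) multiset of eigenvalues of a real matrix: roots of its
characteristic polynomial over `ℂ`. -/
noncomputable def specC {k : Type*} [Fintype k] [DecidableEq k]
    (M : Matrix k k ℝ) : Multiset ℂ :=
  ((M.map (Complex.ofReal)).charpoly).roots

/-- The energy of a real matrix: the sum of absolute values of its eigenvalues. -/
noncomputable def energy {k : Type*} [Fintype k] [DecidableEq k]
    (M : Matrix k k ℝ) : ℝ :=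
  ((specC M).map (fun z : ℂ => ‖z‖)).sum

/-! The all-ones matrix factors as `J = u uᵀ` with `u` the all-ones column, so
`J_m ⊗ B = (u ⊗ I)(uᵀ ⊗ B)`; swapping the two factors shows that `J_m ⊗ B` has the
spectrum of `m B` together with `(m - 1) n` zeros. The Seidel matrices of `D_m(G)` and
`D_m^*(G)` are `J_m ⊗ (S + I) - I` and `J_m ⊗ (S - I) + I`, where `S` is the Seidel matrix
of `G`, which gives their spectra `{mσ_i + (m - 1)} ∪ {(-1)^{(m-1)n}}` and
`{mσ_i - (m - 1)} ∪ {1^{(m-1)n}}`. If `|σ_i| > (m - 1)/m`, no `mσ_i + (m - 1)` equals `1`,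
so `1` is an eigenvalue of `D_m^*(G)` but not of `D_m(G)`. -/

open Polynomial

theorem Polynomial.roots_eq_map_of_comp_C_mul_X_add_C_eq {R : Type*} [CommRing R] [IsDomain R]
    {p q : R[X]} {a b u : R} (ha : IsUnit a) (hu : u ≠ 0)
    (h : p.comp (C a * X + C b) = C u * q) : p.roots = q.roots.map (a * · + b) := by
  rw [← map_roots_comp_C_mul_X_add_C p a b ha, h, roots_C_mul q hu]

namespace Matrix

variable {R : Type*} [CommRing R] {n : Type*} [Fintype n] [DecidableEq n]

theorem charpoly_smul_add_scalar_comp (M : Matrix n n R) (c d : R) :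
    (c • M + scalar n d).charpoly.comp (C c * X + C d) =
      C (c ^ Fintype.card n) * M.charpoly := by
  have hmap : (charmatrix (c • M + scalar n d)).map (compRingHom (C c * X + C d)) =
      C c • charmatrix M := by
    ext i j : 1
    by_cases hij : i = j
    · subst hij
      simp only [charmatrix_apply_eq, map_apply, coe_compRingHom_apply, sub_comp, X_comp,
        C_comp, add_comp, mul_comp, add_apply, smul_apply, scalar_apply, diagonal_apply_eq,
        smul_eq_mul, map_add, C_mul]
      ring
    · simp [hij]
  rw [charpoly, ← coe_compRingHom_apply, RingHom.map_det, RingHom.mapMatrix_apply, hmap,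
    det_smul, charpoly, C_pow]

theorem charpoly_ones_kronecker {ι : Type*} [Fintype ι] [DecidableEq ι] [Nonempty ι]
    (B : Matrix n n R) :
    (of (fun _ _ => (1 : R)) ⊗ₖ B : Matrix (ι × n) (ι × n) R).charpoly =
      X ^ ((Fintype.card ι - 1) * Fintype.card n) * ((Fintype.card ι : R) • B).charpoly := by
  let u : Matrix ι Unit R := of fun _ _ => 1
  have hJ : (of fun _ _ => (1 : R) : Matrix ι ι R) ⊗ₖ B =
      (u ⊗ₖ (1 : Matrix n n R)) * (uᵀ ⊗ₖ B) := by
    rw [← mul_kronecker_mul, Matrix.one_mul]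
    congr 1
    ext i j
    simp [u, mul_apply]
  have hswap : (uᵀ ⊗ₖ B) * (u ⊗ₖ (1 : Matrix n n R)) =
      reindex (Equiv.punitProd n).symm (Equiv.punitProd n).symm ((Fintype.card ι : R) • B) := by
    rw [← mul_kronecker_mul, Matrix.mul_one]
    ext ⟨⟨⟩, i⟩ ⟨⟨⟩, j⟩
    simp [u, mul_apply]
  have hle : Fintype.card (Unit × n) ≤ Fintype.card (ι × n) := by
    simp [Fintype.card_prod, Nat.le_mul_of_pos_left, Fintype.card_pos]
  have hcard : Fintype.card (ι × n) - Fintype.card (Unit × n) =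
      (Fintype.card ι - 1) * Fintype.card n := by
    simp [Fintype.card_prod, Nat.sub_mul]
  rw [hJ, charpoly_mul_comm_of_le _ _ hle, hswap, charpoly_reindex, hcard]

end Matrix

section SeidelSpectrum

variable {ι κ : Type*} [Fintype ι] [DecidableEq ι] [Fintype κ] [DecidableEq κ]

theorem specC_eq_roots_map_charpoly (M : Matrix κ κ ℝ) :
    specC M = (M.charpoly.map Complex.ofRealHom).roots := by
  rw [specC, ← charpoly_map]
  rfl

theorem specC_smul_add_scalar (M : Matrix κ κ ℝ) {c : ℝ} (hc : c ≠ 0) (d : ℝ) :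
    specC (c • M + scalar κ d) = (specC M).map (fun z => (c : ℂ) * z + d) := by
  rw [specC_eq_roots_map_charpoly, specC_eq_roots_map_charpoly]
  refine roots_eq_map_of_comp_C_mul_X_add_C_eq (Complex.ofReal_ne_zero.mpr hc).isUnit
    (pow_ne_zero (Fintype.card κ) (Complex.ofReal_ne_zero.mpr hc)) ?_
  simpa [Polynomial.map_comp] using
    congrArg (Polynomial.map Complex.ofRealHom) (charpoly_smul_add_scalar_comp M c d)

theorem specC_add_scalar (M : Matrix κ κ ℝ) (d : ℝ) :
    specC (M + scalar κ d) = (specC M).map (· + (d : ℂ)) := by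
  simpa using specC_smul_add_scalar M one_ne_zero d

theorem specC_allOnes_kronecker [Nonempty ι] (B : Matrix κ κ ℝ) :
    specC (allOnes ι ⊗ₖ B) = specC ((Fintype.card ι : ℝ) • B) +
      Multiset.replicate ((Fintype.card ι - 1) * Fintype.card κ) 0 := by
  rw [specC_eq_roots_map_charpoly, specC_eq_roots_map_charpoly, allOnes,
    charpoly_ones_kronecker, Polynomial.map_mul,
    roots_mul (((monic_X_pow _).map _).mul ((charpoly_monic _).map _)).ne_zero,
    Polynomial.map_pow, map_X, roots_X_pow, Multiset.nsmul_singleton, add_comm]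

theorem seidelOf_allOnes_kronecker (A : Matrix κ κ ℝ) :
    seidelOf (allOnes ι ⊗ₖ A) =
      allOnes ι ⊗ₖ (seidelOf A + 1) + scalar (ι × κ) (-1) := by
  ext ⟨i, a⟩ ⟨j, b⟩
  simp only [seidelOf, allOnes, Matrix.sub_apply, Matrix.add_apply, Matrix.smul_apply,
    kronecker_apply, of_apply, one_apply, scalar_apply, diagonal_apply, Prod.mk.injEq]
  split_ifs <;> simp only [nsmul_eq_mul] <;> grind

theorem seidelOf_allOnes_kronecker_add_one_sub_one (A : Matrix κ κ ℝ) :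
    seidelOf (allOnes ι ⊗ₖ (A + 1) - 1) =
      allOnes ι ⊗ₖ (seidelOf A - 1) + scalar (ι × κ) 1 := by
  ext ⟨i, a⟩ ⟨j, b⟩
  simp only [seidelOf, allOnes, Matrix.sub_apply, Matrix.add_apply, Matrix.smul_apply,
    kronecker_apply, of_apply, one_apply, scalar_apply, diagonal_apply, Prod.mk.injEq]
  split_ifs <;> simp only [nsmul_eq_mul] <;> grind

theorem specC_seidelOf_allOnes_kronecker [Nonempty ι] (A : Matrix κ κ ℝ) :
    specC (seidelOf (allOnes ι ⊗ₖ A)) =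
      (specC (seidelOf A)).map (fun z : ℂ => Fintype.card ι * z + (Fintype.card ι - 1)) +
        Multiset.replicate ((Fintype.card ι - 1) * Fintype.card κ) (-1 : ℂ) := by
  have hscale : (Fintype.card ι : ℝ) • (seidelOf A + 1) =
      (Fintype.card ι : ℝ) • seidelOf A + scalar κ (Fintype.card ι : ℝ) := by
    rw [smul_add, scalar_apply, smul_one_eq_diagonal]
  rw [seidelOf_allOnes_kronecker, specC_add_scalar, specC_allOnes_kronecker, hscale,
    specC_smul_add_scalar _ (Nat.cast_ne_zero.mpr Fintype.card_ne_zero)]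
  simp only [Multiset.map_add, Multiset.map_map, Multiset.map_replicate, Function.comp_def]
  push_cast
  congr 2
  · funext z
    ring
  · ring

theorem specC_seidelOf_allOnes_kronecker_add_one_sub_one [Nonempty ι] (A : Matrix κ κ ℝ) :
    specC (seidelOf (allOnes ι ⊗ₖ (A + 1) - 1)) =
      (specC (seidelOf A)).map (fun z : ℂ => Fintype.card ι * z - (Fintype.card ι - 1)) +
        Multiset.replicate ((Fintype.card ι - 1) * Fintype.card κ) (1 : ℂ) := by
  have hscale : (Fintype.card ι : ℝ) • (seidelOf A - 1) =
      (Fintype.card ι : ℝ) • seidelOf A + scalar κ (-(Fintype.card ι : ℝ)) := by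
    rw [smul_sub, scalar_apply, ← diagonal_neg, ← smul_one_eq_diagonal, sub_eq_add_neg]
  rw [seidelOf_allOnes_kronecker_add_one_sub_one, specC_add_scalar, specC_allOnes_kronecker,
    hscale, specC_smul_add_scalar _ (Nat.cast_ne_zero.mpr Fintype.card_ne_zero)]
  simp only [Multiset.map_add, Multiset.map_map, Multiset.map_replicate, Function.comp_def]
  push_cast
  congr 2
  · funext z
    ring
  · ring

end SeidelSpectrum

theorem mul_add_sub_one_ne_one {m s : ℝ} (hm : 2 ≤ m) (hs : (m - 1) / m < |s|) :
    m * s + (m - 1) ≠ 1 := by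
  intro h
  rw [div_lt_iff₀ (by linarith)] at hs
  rcases abs_cases s with ⟨habs, -⟩ | ⟨habs, -⟩ <;> rw [habs] at hs <;> nlinarith

theorem not_seidel_cospectral {m n : ℕ} (hm : 2 ≤ m) (hn : 1 ≤ n)
    (G : SimpleGraph (Fin n)) [DecidableRel G.Adj] (σ : Fin n → ℝ)
    (hspec : specC (seidelOf (G.adjMatrix ℝ)) =
      (Finset.univ.val.map fun i => ((σ i : ℝ) : ℂ)))
    (habs : ∀ i, |σ i| > ((m : ℝ) - 1) / m) :
    m * n - n ≤ (specC (seidelOf (allOnes (Fin m) ⊗ₖ G.adjMatrix ℝ))).count (-1 : ℂ) ∧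
    specC (seidelOf (allOnes (Fin m) ⊗ₖ G.adjMatrix ℝ)) ≠
      specC (seidelOf (allOnes (Fin m) ⊗ₖ (G.adjMatrix ℝ + 1) - 1)) ∧
    (specC (seidelOf (allOnes (Fin m) ⊗ₖ G.adjMatrix ℝ))).count (1 : ℂ) ≠
      (specC (seidelOf (allOnes (Fin m) ⊗ₖ (G.adjMatrix ℝ + 1) - 1))).count (1 : ℂ) := by
  have : Nonempty (Fin m) := ⟨⟨0, by omega⟩⟩
  have hDm := specC_seidelOf_allOnes_kronecker (ι := Fin m) (G.adjMatrix ℝ)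
  have hDm' := specC_seidelOf_allOnes_kronecker_add_one_sub_one (ι := Fin m) (G.adjMatrix ℝ)
  simp only [Fintype.card_fin, hspec, Multiset.map_map, Function.comp_def] at hDm hDm'
  set D := seidelOf (allOnes (Fin m) ⊗ₖ G.adjMatrix ℝ)
  set D' := seidelOf (allOnes (Fin m) ⊗ₖ (G.adjMatrix ℝ + 1) - 1)
  have hone_notMem : (specC D).count 1 = 0 := by
    rw [hDm, Multiset.count_add, Multiset.count_replicate, if_neg (by norm_num), add_zero,
      Multiset.count_eq_zero, Multiset.mem_map]
    rintro ⟨i, -, hi⟩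
    exact mul_add_sub_one_ne_one (by exact_mod_cast hm) (habs i) (by exact_mod_cast hi)
  have hone_mem : 0 < (specC D').count 1 := by
    rw [hDm', Multiset.count_add, Multiset.count_replicate_self]
    have := Nat.mul_pos (Nat.sub_pos_of_lt hm) hn
    omega
  have hcount : (specC D).count 1 ≠ (specC D').count 1 := by omega
  refine ⟨?_, fun h => hcount (by rw [h]), hcount⟩
  rw [hDm, Multiset.count_add, Multiset.count_replicate_self, Nat.sub_mul, one_mul]
  omega
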